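/- Let G be a homogeneous torsion-free transitive abelian group. Then for every index set I with at least two elements, the product ∏_{i∈I} G of copies of G is transitive. -/

import Mathlib

/-- `n` divides `x` in the group `G`. -/
def Divides {G : Type*} [AddCommGroup G] (n : ℕ) (x : G) : Prop :=
  ∃ z : G, n • z = x

/-- `χ(x) ≤ χ(y)`: every prime-power dividing `x` divides `y`. -/
def HeightLE {G H : Type*} [AddCommGroup G] [AddCommGroup H] (x : G) (y : H) : Prop :=
  ∀ p k : ℕ, p.Prime → Divides (p ^ k) x → Divides (p ^ k) y

/-- `χ(x) = χ(y)`. -/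
def HeightEq {G H : Type*} [AddCommGroup G] [AddCommGroup H] (x : G) (y : H) : Prop :=
  HeightLE x y ∧ HeightLE y x

def FullyTransitive (G : Type*) [AddCommGroup G] : Prop :=
  ∀ x y : G, HeightLE x y → ∃ φ : G →+ G, φ x = y

def KrylovTransitive (G : Type*) [AddCommGroup G] : Prop :=
  ∀ x y : G, HeightEq x y → ∃ φ : G →+ G, φ x = y

def TransitiveGrp (G : Type*) [AddCommGroup G] : Prop :=
  ∀ x y : G, HeightEq x y → ∃ φ : G ≃+ G, φ x = y

def WeaklyTransitive (G : Type*) [AddCommGroup G] : Prop :=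
  ∀ (x y : G) (φ ψ : G →+ G), φ x = y → ψ y = x → ∃ η : G ≃+ G, η x = y

def IsTorsionFreeGrp (G : Type*) [AddCommGroup G] : Prop :=
  ∀ (n : ℤ) (x : G), n ≠ 0 → n • x = 0 → x = 0

/-- `τ(x) ≤ τ(y)`. -/
def TypeLE {G H : Type*} [AddCommGroup G] [AddCommGroup H] (x : G) (y : H) : Prop :=
  ∃ n : ℤ, n ≠ 0 ∧ HeightLE x (n • y)

/-- `τ(x) = τ(y)`. -/
def TypeEq {G H : Type*} [AddCommGroup G] [AddCommGroup H] (x : G) (y : H) : Prop :=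
  TypeLE x y ∧ TypeLE y x

def Homogeneous (G : Type*) [AddCommGroup G] : Prop :=
  ∀ x y : G, x ≠ 0 → y ≠ 0 → TypeEq x y

/-- `π(G)`: primes `p` with `pG ≠ G`. -/
def piSet (G : Type*) [AddCommGroup G] : Set ℕ :=
  {p | p.Prime ∧ ¬ ∀ x : G, ∃ z : G, p • z = x}

/-!
Write `pHeight p x ∈ ℕ∞` for the `p`-entry of the characteristic `χ(x)`. In a torsion-free
homogeneous group two nonzero characteristics differ at finitely many primes, by finite amounts, so
a nonzero `a` can be written `a = N • u` with `χ(u) = χ(a) ∧ χ(t)` for any nonzero `t`, where only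
primes at which `a` is higher than `t` divide `N`. With transitivity this gives full transitivity,
and a Bézout argument over these `N` shows that every `t` with `χ(t) ≥ inf_b χ(g b)` (some
`g b ≠ 0`) is `φ g` for a homomorphism `φ : (B → G) →+ G`.

In `I → G`, say that `S ⊆ I` carries the heights of `x` if `χ(x|S) ≤ χ(x)`. If `S` carries the
heights of `x`, `Sᶜ` those of `y` and `χ(x) = χ(y)`, two shears `z ↦ z + T z`, with `T` reading
the coordinates on one side and writing on the other, turn `x` into `y`. So it suffices to move
every element into such a position. For finite `I`, after dividing two coordinates down to
multiples `a • u`, `b • u` of one element, the Euclidean algorithm with transvections kills one of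
them; repeating this concentrates `x` in a single coordinate. For infinite `I`, a spare coordinate
of `S` for each prime `p` can be given `p`-height exactly `pHeight p x`.
-/

open Function

section Heights

variable {G H I : Type*} [AddCommGroup G] [AddCommGroup H]

lemma Divides.of_dvd {m n : ℕ} {x : G} (hmn : m ∣ n) (h : Divides n x) : Divides m x := by
  obtain ⟨k, rfl⟩ := hmn
  obtain ⟨z, rfl⟩ := h
  exact ⟨k • z, by rw [mul_smul]⟩

lemma Divides.map (f : G →+ H) {n : ℕ} {x : G} (h : Divides n x) : Divides n (f x) := by
  obtain ⟨z, rfl⟩ := h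
  exact ⟨f z, (map_nsmul f n z).symm⟩

lemma divides_one (x : G) : Divides 1 x := ⟨x, one_smul ℕ x⟩

lemma divides_zero (n : ℕ) : Divides n (0 : G) := ⟨0, smul_zero n⟩

lemma divides_pi_iff {n : ℕ} {x : I → G} : Divides n x ↔ ∀ i, Divides n (x i) :=
  ⟨fun ⟨z, hz⟩ i => ⟨z i, congrFun hz i⟩, fun h => by choose z hz using h; exact ⟨z, funext hz⟩⟩

lemma Divides.mul_of_coprime {m n : ℕ} {x : G} (hmn : m.Coprime n) (hm : Divides m x)
    (hn : Divides n x) : Divides (m * n) x := by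
  obtain ⟨a, b, hab⟩ := Nat.isCoprime_iff_coprime.2 hmn
  obtain ⟨y, hy⟩ := hm
  obtain ⟨z, hz⟩ := hn
  refine ⟨b • y + a • z, ?_⟩
  rw [← natCast_zsmul] at hy hz ⊢
  push_cast
  linear_combination (norm := module) (b * n) • hy + (a * m) • hz + hab • x

lemma Divides.of_nsmul_of_coprime {m n : ℕ} {x : G} (hmn : m.Coprime n)
    (h : Divides n (m • x)) : Divides n x := by
  obtain ⟨a, b, hab⟩ := Nat.isCoprime_iff_coprime.2 hmn
  obtain ⟨w, hw⟩ := h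
  refine ⟨a • w + b • x, ?_⟩
  rw [← natCast_zsmul, ← natCast_zsmul] at hw
  rw [← natCast_zsmul]
  linear_combination (norm := module) a • hw + hab • x

lemma divides_of_forall_prime_pow {N : ℕ} (hN : N ≠ 0) {x : G}
    (h : ∀ p, p.Prime → Divides (p ^ N.factorization p) x) : Divides N x := by
  induction N using Nat.recOnPrimeCoprime with
  | zero => exact absurd rfl hN
  | prime_pow p k hp => simpa [hp.factorization_self] using h p hp
  | coprime a b _ _ hab iha ihb =>
    have ha : a ≠ 0 := by rintro rfl; simp at hN
    have hb : b ≠ 0 := by rintro rfl; simp at hN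
    refine (iha ha fun p hp => ?_).mul_of_coprime hab (ihb hb fun p hp => ?_) <;>
      refine (h p hp).of_dvd (pow_dvd_pow p ?_) <;>
      simp [Nat.factorization_mul ha hb]

noncomputable def pHeight (p : ℕ) (x : G) : ℕ∞ :=
  ⨆ (k : ℕ) (_ : Divides (p ^ k) x), (k : ℕ∞)

lemma natCast_le_pHeight_iff {p k : ℕ} {x : G} : (k : ℕ∞) ≤ pHeight p x ↔ Divides (p ^ k) x := by
  refine ⟨fun hk => ?_, fun h => le_iSup₂_of_le k h le_rfl⟩
  by_contra hx
  have hlt : ∀ j, Divides (p ^ j) x → j < k := fun j hj =>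
    not_le.1 fun hkj => hx (hj.of_dvd (pow_dvd_pow p hkj))
  have hk0 : k ≠ 0 := by rintro rfl; exact hx (by simpa using divides_one x)
  have : pHeight p x ≤ (k - 1 : ℕ) :=
    iSup₂_le fun j hj => Nat.cast_le.2 (Nat.le_sub_one_of_lt (hlt j hj))
  have := hk.trans this
  norm_cast at this
  omega

lemma pHeight_le_pHeight_iff {p : ℕ} {x : G} {y : H} :
    pHeight p x ≤ pHeight p y ↔ ∀ k, Divides (p ^ k) x → Divides (p ^ k) y := by
  simp_rw [← natCast_le_pHeight_iff]
  exact ENat.forall_natCast_le_iff_le.symm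

lemma heightLE_iff_pHeight_le {x : G} {y : H} :
    HeightLE x y ↔ ∀ p, p.Prime → pHeight p x ≤ pHeight p y := by
  simp only [HeightLE, pHeight_le_pHeight_iff]
  exact ⟨fun h p hp k => h p k hp, fun h p k hp => h p hp k⟩

lemma heightEq_iff_pHeight_eq {x : G} {y : H} :
    HeightEq x y ↔ ∀ p, p.Prime → pHeight p x = pHeight p y := by
  simp only [HeightEq, heightLE_iff_pHeight_le, le_antisymm_iff, forall_and]

lemma HeightLE.trans {K : Type*} [AddCommGroup K] {x : G} {y : H} {z : K} (hxy : HeightLE x y)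
    (hyz : HeightLE y z) : HeightLE x z :=
  fun p k hp h => hyz p k hp (hxy p k hp h)

lemma heightLE_zero (x : G) : HeightLE x (0 : H) := fun _ _ _ _ => divides_zero _

lemma heightLE_map (f : G →+ H) (x : G) : HeightLE x (f x) := fun _ _ _ h => h.map f

lemma heightEq_addEquiv (e : G ≃+ H) (x : G) : HeightEq x (e x) :=
  ⟨heightLE_map e.toAddMonoidHom x, by simpa using heightLE_map e.symm.toAddMonoidHom (e x)⟩

lemma pHeight_le_map (f : G →+ H) (p : ℕ) (x : G) : pHeight p x ≤ pHeight p (f x) :=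
  pHeight_le_pHeight_iff.2 fun _ h => h.map f

lemma pHeight_addEquiv (e : G ≃+ H) (p : ℕ) (x : G) : pHeight p (e x) = pHeight p x :=
  le_antisymm (by simpa using pHeight_le_map e.symm.toAddMonoidHom p (e x))
    (pHeight_le_map e.toAddMonoidHom p x)

lemma pHeight_zero (p : ℕ) : pHeight p (0 : G) = ⊤ :=
  top_le_iff.1 <| ENat.forall_natCast_le_iff_le.1 fun _ _ =>
    natCast_le_pHeight_iff.2 (divides_zero _)

lemma pHeight_neg (p : ℕ) (x : G) : pHeight p (-x) = pHeight p x :=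
  pHeight_addEquiv (AddEquiv.neg G) p x

lemma pHeight_zsmul (p : ℕ) (n : ℤ) (x : G) : pHeight p (n • x) = pHeight p (n.natAbs • x) := by
  obtain ⟨m, rfl | rfl⟩ := Int.eq_nat_or_neg n <;> simp [natCast_zsmul, pHeight_neg]

lemma min_le_pHeight_add (p : ℕ) (x y : G) :
    min (pHeight p x) (pHeight p y) ≤ pHeight p (x + y) := by
  refine ENat.forall_natCast_le_iff_le.1 fun k hk => ?_
  obtain ⟨a, rfl⟩ := natCast_le_pHeight_iff.1 (hk.trans (min_le_left _ _))
  obtain ⟨b, rfl⟩ := natCast_le_pHeight_iff.1 (hk.trans (min_le_right _ _))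
  exact natCast_le_pHeight_iff.2 ⟨a + b, smul_add _ _ _⟩

lemma min_le_pHeight_sub (p : ℕ) (x y : G) :
    min (pHeight p x) (pHeight p y) ≤ pHeight p (x - y) := by
  simpa [sub_eq_add_neg, pHeight_neg] using min_le_pHeight_add p x (-y)

lemma pHeight_add_of_lt {p : ℕ} {x y : G} (h : pHeight p x < pHeight p y) :
    pHeight p (x + y) = pHeight p x := by
  refine le_antisymm ?_ (by simpa [h.le] using min_le_pHeight_add p x y)
  by_contra! hlt
  have := min_le_pHeight_sub p (x + y) y
  rw [add_sub_cancel_right] at this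
  exact (lt_min hlt h).not_ge this

lemma exists_pHeight_add_nsmul_eq {p : ℕ} {a w : G} (ha : pHeight p w ≤ pHeight p a) :
    ∃ c : ℕ, c ≠ 0 ∧ pHeight p (a + c • w) = pHeight p w := by
  by_cases h : pHeight p (a + w) = pHeight p w
  · exact ⟨1, one_ne_zero, by rwa [one_smul]⟩
  have hlt : pHeight p w < pHeight p (a + w) :=
    lt_of_le_of_ne (by simpa [ha] using min_le_pHeight_add p a w) (Ne.symm h)
  refine ⟨2, two_ne_zero, ?_⟩
  rw [two_nsmul, ← add_assoc, add_comm, pHeight_add_of_lt hlt]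

lemma pHeight_pi (p : ℕ) (x : I → G) : pHeight p x = ⨅ i, pHeight p (x i) :=
  ENat.eq_of_forall_natCast_le_iff fun k => by
    simp only [le_iInf_iff, natCast_le_pHeight_iff, divides_pi_iff]

lemma pHeight_le_apply (p : ℕ) (x : I → G) (i : I) : pHeight p x ≤ pHeight p (x i) :=
  (pHeight_pi p x).trans_le (iInf_le _ i)

lemma exists_pHeight_apply_eq {p : ℕ} {x : I → G} (h : pHeight p x ≠ ⊤) :
    ∃ i, pHeight p (x i) = pHeight p x := by
  rw [pHeight_pi] at h ⊢
  have : Nonempty I := not_isEmpty_iff.1 fun _ => h (iInf_of_empty _)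
  exact ciInf_mem _

lemma TransitiveGrp.eq_zero_of_heightLE (ht : TransitiveGrp G) {x : G} (h : HeightLE (0 : H) x) :
    x = 0 := by
  obtain ⟨σ, hσ⟩ := ht 0 x ⟨fun p k hp _ => h p k hp (divides_zero _), heightLE_zero x⟩
  rw [← hσ, map_zero]

lemma TransitiveGrp.eq_zero_of_heightLE_pi (ht : TransitiveGrp G) {x : I → G}
    (h : HeightLE (0 : H) x) : x = 0 :=
  funext fun i => ht.eq_zero_of_heightLE (h.trans (heightLE_map (Pi.evalAddMonoidHom _ i) x))

end Heights

lemma exists_factorization_eq_of_le {n : ℕ} (hn : n ≠ 0) (e : ℕ → ℕ)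
    (he : ∀ p, e p ≤ n.factorization p) : ∃ N, N ≠ 0 ∧ ∀ p, N.factorization p = e p := by
  let f : ℕ →₀ ℕ := Finsupp.onFinset n.factorization.support e fun p hp =>
    Finsupp.mem_support_iff.2 (by have := he p; omega)
  have hf : f ≤ n.factorization := fun p => he p
  exact ⟨f.prod (· ^ ·), ne_zero_of_dvd_ne_zero hn (Nat.prod_pow_dvd_of_le_factorization hf),
    fun p => by rw [Nat.factorization_prod_pow_eq_self_of_le_factorization hf]; rfl⟩

lemma Int.ideal_eq_top_of_forall_exists_not_dvd {J : Ideal ℤ}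
    (h : ∀ p : ℕ, p.Prime → ∃ m ∈ J, ¬ (p : ℤ) ∣ m) : J = ⊤ := by
  obtain ⟨d, rfl⟩ := Submodule.IsPrincipal.principal J
  refine Ideal.span_singleton_eq_top.2 (Int.isUnit_iff_natAbs_eq.2 ?_)
  by_contra hd
  obtain ⟨p, hp, hpd⟩ := Nat.exists_prime_and_dvd hd
  obtain ⟨m, hm, hpm⟩ := h p hp
  exact hpm ((Int.natCast_dvd.2 hpd).trans (Ideal.mem_span_singleton.1 hm))

section Homogeneous

variable {G : Type*} [AddCommGroup G] (hTF : IsTorsionFreeGrp G)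
include hTF

lemma IsTorsionFreeGrp.nsmul_injective {n : ℕ} (hn : n ≠ 0) : Injective (n • · : G → G) :=
  fun a b h => sub_eq_zero.1 <| hTF n (a - b) (by exact_mod_cast hn) <| by
    simpa [natCast_zsmul, smul_sub, sub_eq_zero] using h

lemma pHeight_nsmul {p : ℕ} (hp : p.Prime) {n : ℕ} (hn : n ≠ 0) (x : G) :
    pHeight p (n • x) = pHeight p x + n.factorization p := by
  set a := n.factorization p
  set m := n / p ^ a
  have hnm : p ^ a * m = n := Nat.ordProj_mul_ordCompl_eq_self n p
  have hm : m.Coprime p := ((hp.coprime_iff_not_dvd).2 (Nat.not_dvd_ordCompl hp hn)).symm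
  refine ENat.eq_of_forall_natCast_le_iff fun k => ?_
  rw [← tsub_le_iff_right, ← ENat.natCast_sub, natCast_le_pHeight_iff, natCast_le_pHeight_iff]
  constructor
  · rintro ⟨w, hw⟩
    rcases le_or_gt k a with hka | hak
    · simpa [Nat.sub_eq_zero_of_le hka] using divides_one x
    refine Divides.of_nsmul_of_coprime (hm.pow_right (k - a)) ⟨w, ?_⟩
    have : p ^ a • p ^ (k - a) • w = p ^ a • m • x := by
      rw [smul_smul, ← pow_add, Nat.add_sub_cancel' hak.le, hw, smul_smul, hnm]
    exact hTF.nsmul_injective (pow_ne_zero a hp.ne_zero) this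
  · rintro ⟨z, rfl⟩
    refine Divides.of_dvd (pow_dvd_pow p (by omega : k ≤ a + (k - a))) ⟨m • z, ?_⟩
    rw [← hnm, smul_smul, smul_smul, pow_add]
    congr 1
    ring

variable (hhom : Homogeneous G)
include hhom

lemma exists_pHeight_le_add_factorization {a t : G} (ha : a ≠ 0) (ht : t ≠ 0) :
    ∃ n : ℕ, n ≠ 0 ∧ ∀ p, p.Prime → pHeight p a ≤ pHeight p t + n.factorization p := by
  obtain ⟨n, hn, hle⟩ := (hhom a t ha ht).1
  refine ⟨n.natAbs, Int.natAbs_ne_zero.2 hn, fun p hp => ?_⟩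
  rw [← pHeight_nsmul hTF hp (Int.natAbs_ne_zero.2 hn), ← pHeight_zsmul]
  exact heightLE_iff_pHeight_le.1 hle p hp

lemma exists_nsmul_eq_and_pHeight_eq_min {a t : G} (ha : a ≠ 0) (ht : t ≠ 0) :
    ∃ (N : ℕ) (u : G), N • u = a ∧
      (∀ p, p.Prime → pHeight p u = min (pHeight p a) (pHeight p t)) ∧
      ∀ p, p.Prime → p ∣ N → pHeight p t < pHeight p a := by
  obtain ⟨n, hn, hgap⟩ := exists_pHeight_le_add_factorization hTF hhom ha ht
  have hgap' : ∀ p, p.Prime → pHeight p a - pHeight p t ≤ n.factorization p :=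
    fun p hp => tsub_le_iff_left.2 (hgap p hp)
  obtain ⟨N, hN, hNe⟩ := exists_factorization_eq_of_le hn
    (fun p => if p.Prime then (pHeight p a - pHeight p t).toNat else 0) fun p => by
      split_ifs with hp
      exacts [ENat.toNat_le_of_le_natCast (hgap' p hp), Nat.zero_le _]
  have hNa : ∀ p, p.Prime → (N.factorization p : ℕ∞) = pHeight p a - pHeight p t := fun p hp => by
    rw [hNe, if_pos hp,
      ENat.natCast_toNat (ne_top_of_le_ne_top (ENat.natCast_ne_top _) (hgap' p hp))]
  obtain ⟨u, rfl⟩ := divides_of_forall_prime_pow hN fun p hp =>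
    natCast_le_pHeight_iff.1 ((hNa p hp).trans_le tsub_le_self)
  refine ⟨N, u, rfl, fun p hp => ?_, fun p hp hpN => ?_⟩
  · refine ENat.add_left_injective_of_ne_top (ENat.natCast_ne_top (N.factorization p)) ?_
    dsimp only
    rw [← pHeight_nsmul hTF hp hN, hNa p hp, add_comm, tsub_add_min]
  · exact tsub_pos_iff_lt.1 (hNa p hp ▸ Nat.cast_pos.2 (hp.factorization_pos_of_dvd hN hpN))

variable (ht : TransitiveGrp G)
include ht

theorem fullyTransitive_of_homogeneous : FullyTransitive G := by
  intro x y hxy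
  rcases eq_or_ne x 0 with rfl | hx
  · exact ⟨0, (ht.eq_zero_of_heightLE hxy).symm⟩
  rcases eq_or_ne y 0 with rfl | hy
  · exact ⟨0, rfl⟩
  obtain ⟨N, z, rfl, hz, -⟩ := exists_nsmul_eq_and_pHeight_eq_min hTF hhom hy hx
  obtain ⟨σ, hσ⟩ := ht x z <| heightEq_iff_pHeight_eq.2 fun p hp => by
    rw [hz p hp, min_eq_right (heightLE_iff_pHeight_le.1 hxy p hp)]
  exact ⟨N • σ.toAddMonoidHom, by simp [hσ]⟩

theorem exists_addMonoidHom_pi_apply_eq {B : Type*} {g : B → G} (hg : g ≠ 0) {t : G}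
    (hle : HeightLE g t) : ∃ φ : (B → G) →+ G, φ g = t := by
  rcases eq_or_ne t 0 with rfl | ht0
  · exact ⟨0, rfl⟩
  -- The `m` for which `m • t` is reachable from `g` form an ideal `J`. Writing `g b = N • u` with
  -- `χ(u) = χ(g b) ∧ χ(t)` puts `N` in `J`, and these `N` have no common prime factor.
  let J : Ideal ℤ :=
    { carrier := {m | ∃ φ : (B → G) →+ G, φ g = m • t}
      add_mem' := fun ⟨φ, hφ⟩ ⟨ψ, hψ⟩ => ⟨φ + ψ, by simp [hφ, hψ, add_smul]⟩
      zero_mem' := ⟨0, by simp⟩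
      smul_mem' := fun c m ⟨φ, hφ⟩ => ⟨c • φ, by simp [hφ, smul_smul]⟩ }
  have hN : ∀ b, g b ≠ 0 → ∃ N : ℕ, (N : ℤ) ∈ J ∧
      ∀ p, p.Prime → p ∣ N → pHeight p t < pHeight p (g b) := by
    intro b hb
    obtain ⟨N, u, hu, hmin, hN⟩ := exists_nsmul_eq_and_pHeight_eq_min hTF hhom hb ht0
    obtain ⟨φ, hφ⟩ := fullyTransitive_of_homogeneous hTF hhom ht u t <|
      heightLE_iff_pHeight_le.2 fun p hp => (hmin p hp).trans_le (min_le_right _ _)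
    exact ⟨N, ⟨φ.comp (Pi.evalAddMonoidHom (fun _ => G) b), by simp [← hu, hφ]⟩, hN⟩
  obtain ⟨c, hc⟩ := Function.ne_iff.1 hg
  obtain ⟨Nc, hNcJ, hNc⟩ := hN c hc
  have hJ : J = ⊤ := Int.ideal_eq_top_of_forall_exists_not_dvd fun p hp => by
    by_cases hpc : p ∣ Nc
    · have htop : pHeight p g ≠ ⊤ :=
        ne_top_of_le_ne_top (hNc p hp hpc).ne_top (heightLE_iff_pHeight_le.1 hle p hp)
      obtain ⟨b, hb⟩ := exists_pHeight_apply_eq htop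
      obtain ⟨Nb, hNbJ, hNb⟩ := hN b fun h0 => htop (by rw [← hb, h0, pHeight_zero])
      refine ⟨Nb, hNbJ, fun hpb => ?_⟩
      have := hNb p hp (Int.natCast_dvd_natCast.1 hpb)
      rw [hb] at this
      exact (heightLE_iff_pHeight_le.1 hle p hp).not_gt this
    · exact ⟨Nc, hNcJ, fun h => hpc (Int.natCast_dvd_natCast.1 h)⟩
  obtain ⟨φ, hφ⟩ : (1 : ℤ) ∈ J := hJ ▸ Submodule.mem_top
  exact ⟨φ, by simpa using hφ⟩

end Homogeneous

def shear {A : Type*} [AddCommGroup A] (T : A →+ A) (hT : ∀ a, T (T a) = 0) : A ≃+ A where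
  toFun a := a + T a
  invFun a := a - T a
  left_inv a := by simp [hT]
  right_inv a := by simp [hT]
  map_add' a b := by simp only [map_add]; abel

@[simp]
lemma shear_apply {A : Type*} [AddCommGroup A] (T : A →+ A) (hT : ∀ a, T (T a) = 0) (a : A) :
    shear T hT a = a + T a :=
  rfl

section Product

variable {G I : Type*} [AddCommGroup G]

def CarriesHeights (S : Set I) (x : I → G) : Prop := HeightLE (S.domRestrict x) x

lemma carriesHeights_of_support_subset {S : Set I} {x : I → G} (h : support x ⊆ S) :
    CarriesHeights S x := by
  refine heightLE_iff_pHeight_le.2 fun p _ => (pHeight_pi p x).symm ▸ le_iInf fun i => ?_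
  by_cases hi : i ∈ S
  · exact pHeight_le_apply p (S.domRestrict x) ⟨i, hi⟩
  · rw [notMem_support.1 fun h' => hi (h h'), pHeight_zero]
    exact le_top

def transvection [DecidableEq I] {i j : I} (hij : i ≠ j) (n : ℤ) : (I → G) ≃+ (I → G) :=
  shear
    { toFun := fun z => Pi.single i (n • z j)
      map_zero' := by simp
      map_add' := fun z w => by simp [smul_add, Pi.single_add] }
    fun z => by simp [Pi.single_eq_of_ne hij.symm]

lemma transvection_apply_self [DecidableEq I] {i j : I} (hij : i ≠ j) (n : ℤ) (z : I → G) :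
    transvection hij n z i = z i + n • z j := by
  simp [transvection]

lemma transvection_apply_of_ne [DecidableEq I] {i j k : I} (hij : i ≠ j) (hki : k ≠ i) (n : ℤ)
    (z : I → G) : transvection hij n z k = z k := by
  simp [transvection, Pi.single_eq_of_ne hki]

lemma exists_addEquiv_eq_zero_or_eq_zero_of_eq_zsmul {i j : I} (hij : i ≠ j) {u : G} {a b : ℤ}
    {x : I → G} (hi : x i = a • u) (hj : x j = b • u) :
    ∃ Θ : (I → G) ≃+ (I → G), (∀ k, k ≠ i → k ≠ j → Θ x k = x k) ∧ (Θ x i = 0 ∨ Θ x j = 0) := by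
  classical
  induction hn : b.natAbs using Nat.strong_induction_on generalizing i j a b x with
  | _ n ih =>
  rcases eq_or_ne b 0 with rfl | hb
  · exact ⟨AddEquiv.refl _, fun _ _ _ => rfl, Or.inr (by simp [hj])⟩
  have hlt : (a % b).natAbs < n := by
    have h₁ := Int.emod_nonneg a hb
    have h₂ := Int.emod_lt_abs a hb
    rw [Int.abs_eq_natAbs] at h₂
    omega
  have hyi : transvection hij (-(a / b)) x i = (a % b) • u := by
    rw [transvection_apply_self, hi, hj, smul_smul, ← add_smul, Int.emod_def]
    ring_nf
  have hyj : transvection hij (-(a / b)) x j = b • u := by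
    rw [transvection_apply_of_ne hij hij.symm, hj]
  obtain ⟨Θ, hΘk, hΘ⟩ := ih _ hlt hij.symm hyj hyi rfl
  refine ⟨(transvection hij _).trans Θ, fun k hki hkj => ?_, hΘ.symm⟩
  simp only [AddEquiv.trans_apply]
  rw [hΘk k hkj hki, transvection_apply_of_ne hij hki]

lemma exists_addEquiv_apply_eq_add_extend {J : Type*} (e : J → I) (w : J → I)
    (c : J → ℕ) (hwe : ∀ p q, c p ≠ 0 → w p ≠ e q) :
    ∃ Θ : (I → G) ≃+ (I → G), ∀ z, Θ z = z + extend e (fun p => c p • z (w p)) 0 := by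
  let T : (I → G) →+ (I → G) :=
    { toFun := fun z => extend e (fun p => c p • z (w p)) 0
      map_zero' := by
        simp only [Pi.zero_apply, smul_zero]
        exact extend_zero e
      map_add' := fun z z' => by
        have := extend_add e (fun p => c p • z (w p)) (fun p => c p • z' (w p)) 0 0
        simp only [Pi.add_apply, smul_add, add_zero] at this ⊢
        exact this }
  have hT : ∀ z, T (T z) = 0 := fun z => by
    refine funext fun i => ?_
    change extend e (fun p => c p • T z (w p)) (0 : I → G) i = 0
    have : ∀ p, c p • T z (w p) = 0 := fun p => by
      rcases eq_or_ne (c p) 0 with hc | hc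
      · rw [hc, zero_smul]
      · change c p • extend e (fun q => c q • z (w q)) (0 : I → G) (w p) = 0
        rw [extend_apply' _ _ _ fun ⟨q, hq⟩ => hwe p q hc hq.symm, Pi.zero_apply, smul_zero]
    simp only [this]
    exact congrFun (extend_zero e) i
  exact ⟨shear T hT, fun z => rfl⟩

lemma lt_pHeight_extend {J : Type*} {p : ℕ} {m : ℕ∞} (hm : m < ⊤) (e : J → I) {g : J → G}
    (hg : ∀ q, m < pHeight p (g q)) (i : I) : m < pHeight p (extend e g 0 i) := by
  classical
  rw [extend_def]
  split_ifs
  exacts [hg _, (pHeight_zero (G := G) p).symm ▸ hm]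

theorem exists_addEquiv_carriesHeights_of_injective {S : Set I} {e : ℕ → I} (he : Injective e)
    (heS : ∀ n, e n ∈ S) (x : I → G) : ∃ Θ : (I → G) ≃+ (I → G), CarriesHeights S (Θ x) := by
  -- If the `p`-height of `x` is attained off `S`, say at `w`, then `e p` receives a multiple of
  -- `x w` that brings its `p`-height down to `pHeight p x`.
  let AttainedOff (p : ℕ) : Prop := ∃ w ∉ S, pHeight p (x w) = pHeight p x
  have hdata : ∀ p, ∃ (w : I) (c : ℕ), (c ≠ 0 → w ∉ S) ∧
      (AttainedOff p → pHeight p (x (e p) + c • x w) = pHeight p x) := by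
    intro p
    by_cases hp : AttainedOff p
    · obtain ⟨w, hwS, hw⟩ := hp
      obtain ⟨c, -, hc⟩ := exists_pHeight_add_nsmul_eq (hw ▸ pHeight_le_apply p x (e p))
      exact ⟨w, c, fun _ => hwS, fun _ => hc.trans hw⟩
    · exact ⟨e p, 0, fun h => absurd rfl h, fun h => absurd h hp⟩
  choose w c hwS hc using hdata
  obtain ⟨Θ, hΘ⟩ := exists_addEquiv_apply_eq_add_extend (G := G) e w c
    fun p q hcp hpq => hwS p hcp (hpq ▸ heS q)
  refine ⟨Θ, heightLE_iff_pHeight_le.2 fun p _ => ?_⟩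
  rw [pHeight_addEquiv]
  by_cases hx : pHeight p x = ⊤
  · exact hx ▸ le_top
  suffices ∃ i ∈ S, pHeight p (Θ x i) = pHeight p x from
    let ⟨i, hi, hxi⟩ := this
    hxi ▸ pHeight_le_apply p (S.domRestrict (Θ x)) ⟨i, hi⟩
  by_cases hp : AttainedOff p
  · exact ⟨e p, heS p, by rw [hΘ, Pi.add_apply, he.extend_apply, hc p hp]⟩
  have hlt : ∀ q, pHeight p x < pHeight p (c q • x (w q)) := fun q => by
    rcases eq_or_ne (c q) 0 with hcq | hcq
    · rw [hcq, zero_smul, pHeight_zero]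
      exact lt_top_iff_ne_top.2 hx
    · have := lt_of_le_of_ne (pHeight_le_apply p x (w q)) fun h => hp ⟨w q, hwS q hcq, h.symm⟩
      exact this.trans_le (pHeight_le_map (nsmulAddMonoidHom (c q)) p (x (w q)))
  obtain ⟨b, hb⟩ := exists_pHeight_apply_eq hx
  refine ⟨b, by_contra fun hbS => hp ⟨b, hbS, hb⟩, ?_⟩
  have := lt_pHeight_extend (lt_top_iff_ne_top.2 hx) e hlt b
  rw [hΘ, Pi.add_apply, pHeight_add_of_lt (hb ▸ this), hb]

variable (hTF : IsTorsionFreeGrp G) (hhom : Homogeneous G) (ht : TransitiveGrp G)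
include hTF hhom ht

theorem exists_addEquiv_apply_eq_of_eqOn {S : Set I} {x y : I → G} (hS : CarriesHeights S x)
    (hx : x ≠ 0) (hxy : Set.EqOn x y S) (hy : ∀ a ∉ S, HeightLE x (y a)) :
    ∃ Θ : (I → G) ≃+ (I → G), Θ x = y := by
  classical
  have hxS : S.domRestrict x ≠ 0 := fun h0 => by
    rw [CarriesHeights, h0] at hS
    exact hx (ht.eq_zero_of_heightLE_pi hS)
  have hrow : ∀ a, ∃ φ : (S → G) →+ G, a ∉ S → φ (S.domRestrict x) = y a - x a := by
    intro a
    by_cases ha : a ∈ S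
    · exact ⟨0, fun h => absurd ha h⟩
    have hle : HeightLE (S.domRestrict x) (y a - x a) := heightLE_iff_pHeight_le.2 fun p hp =>
      calc pHeight p (S.domRestrict x) ≤ pHeight p x := heightLE_iff_pHeight_le.1 hS p hp
        _ ≤ min (pHeight p (y a)) (pHeight p (x a)) :=
          le_min (heightLE_iff_pHeight_le.1 (hy a ha) p hp) (pHeight_le_apply p x a)
        _ ≤ pHeight p (y a - x a) := min_le_pHeight_sub p _ _
    obtain ⟨φ, hφ⟩ := exists_addMonoidHom_pi_apply_eq hTF hhom ht hxS hle
    exact ⟨φ, fun _ => hφ⟩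
  choose φ hφ using hrow
  let T : (I → G) →+ (I → G) :=
    { toFun := fun z a => if a ∈ S then 0 else φ a (S.domRestrict z)
      map_zero' := by ext a; split_ifs; exacts [rfl, map_zero (φ a)]
      map_add' := fun z w => by
        ext a; simp only [Pi.add_apply]; split_ifs; exacts [(add_zero 0).symm, map_add (φ a) _ _] }
  have hT : ∀ z, T (T z) = 0 := fun z => by
    have : S.domRestrict (T z) = 0 := funext fun b => if_pos b.2
    ext a
    change (if a ∈ S then 0 else φ a (S.domRestrict (T z))) = 0
    simp [this]
  refine ⟨shear T hT, funext fun a => ?_⟩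
  by_cases ha : a ∈ S
  · simp [T, ha, hxy ha]
  · simp [T, ha, hφ a ha]

theorem exists_addEquiv_apply_eq_of_carriesHeights (S : Set I) {x y : I → G} (hxy : HeightEq x y)
    (hx : CarriesHeights S x) (hy : CarriesHeights Sᶜ y) : ∃ Θ : (I → G) ≃+ (I → G), Θ x = y := by
  classical
  rcases eq_or_ne x 0 with rfl | hx0
  · exact ⟨AddEquiv.refl _, (ht.eq_zero_of_heightLE_pi hxy.1).symm⟩
  have hy_le : ∀ {z : I → G}, HeightLE z y → ∀ a, HeightLE z (y a) := fun h a =>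
    h.trans (heightLE_map (Pi.evalAddMonoidHom _ a) y)
  obtain ⟨Θ₁, hΘ₁⟩ := exists_addEquiv_apply_eq_of_eqOn hTF hhom ht hx hx0
    (Set.piecewise_eqOn S x y).symm fun a ha => by
      rw [Set.piecewise_eq_of_notMem _ _ _ ha]
      exact hy_le hxy.1 a
  have hx₁ : HeightEq x (S.piecewise x y) := hΘ₁ ▸ heightEq_addEquiv Θ₁ x
  have hcarries : CarriesHeights Sᶜ (S.piecewise x y) := by
    have : Sᶜ.domRestrict (S.piecewise x y) = Sᶜ.domRestrict y :=
      funext fun a => Set.piecewise_eq_of_notMem _ _ _ a.2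
    rw [CarriesHeights, this]
    exact hy.trans (hxy.2.trans hx₁.1)
  obtain ⟨Θ₂, hΘ₂⟩ := exists_addEquiv_apply_eq_of_eqOn hTF hhom ht hcarries
    (hΘ₁ ▸ (map_ne_zero_iff Θ₁ Θ₁.injective).2 hx0) (Set.piecewise_eqOn_compl S x y)
    fun a _ => hy_le (hx₁.2.trans hxy.1) a
  exact ⟨Θ₁.trans Θ₂, by simp [hΘ₁, hΘ₂]⟩

theorem exists_addEquiv_eq_zero_or_eq_zero {i j : I} (hij : i ≠ j) (x : I → G) :
    ∃ Θ : (I → G) ≃+ (I → G), (∀ k, k ≠ i → k ≠ j → Θ x k = x k) ∧ (Θ x i = 0 ∨ Θ x j = 0) := by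
  classical
  by_cases h0 : x i = 0 ∨ x j = 0
  · exact ⟨AddEquiv.refl _, fun _ _ _ => rfl, h0⟩
  rw [not_or] at h0
  obtain ⟨M, u, hu, hminu, -⟩ := exists_nsmul_eq_and_pHeight_eq_min hTF hhom h0.1 h0.2
  obtain ⟨N, v, hv, hminv, -⟩ := exists_nsmul_eq_and_pHeight_eq_min hTF hhom h0.2 h0.1
  obtain ⟨σ, hσ⟩ := ht v u <| heightEq_iff_pHeight_eq.2 fun p hp => by
    rw [hminu p hp, hminv p hp, min_comm]
  let Θ₁ := AddEquiv.piCongrRight (Function.update (fun _ => AddEquiv.refl G) j σ)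
  have hΘ₁ : ∀ k, k ≠ j → Θ₁ x k = x k := fun k hk => by simp [Θ₁, hk]
  obtain ⟨Θ₂, hΘ₂k, hΘ₂⟩ := exists_addEquiv_eq_zero_or_eq_zero_of_eq_zsmul hij (u := u) (a := M)
    (b := N) (x := Θ₁ x) (by rw [hΘ₁ i hij, ← hu, natCast_zsmul])
    (by simp [Θ₁, ← hv, hσ, natCast_zsmul])
  exact ⟨Θ₁.trans Θ₂, fun k hki hkj => by simp [hΘ₂k k hki hkj, hΘ₁ k hkj], hΘ₂⟩

theorem exists_addEquiv_support_subsingleton [Finite I] (x : I → G) :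
    ∃ Θ : (I → G) ≃+ (I → G), (support (Θ x)).Subsingleton := by
  induction hn : (support x).ncard using Nat.strong_induction_on generalizing x with
  | _ n ih =>
  by_cases hx : (support x).Subsingleton
  · exact ⟨AddEquiv.refl _, hx⟩
  obtain ⟨i, hi, j, hj, hij⟩ := Set.not_subsingleton_iff.1 hx
  obtain ⟨Θ₁, hΘ₁k, hΘ₁⟩ := exists_addEquiv_eq_zero_or_eq_zero hTF hhom ht hij x
  have hsub : support (Θ₁ x) ⊂ support x := by
    refine ⟨fun k hk => ?_, fun hle => hΘ₁.elim (hle hi) (hle hj)⟩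
    by_cases hki : k = i
    · exact hki ▸ hi
    by_cases hkj : k = j
    · exact hkj ▸ hj
    rwa [mem_support, hΘ₁k k hki hkj] at hk
  obtain ⟨Θ₂, hΘ₂⟩ := ih _ (hn ▸ Set.ncard_lt_ncard hsub) (Θ₁ x) rfl
  exact ⟨Θ₁.trans Θ₂, hΘ₂⟩

theorem exists_addEquiv_support_subset_singleton [Finite I] (x : I → G) (i : I) :
    ∃ Θ : (I → G) ≃+ (I → G), support (Θ x) ⊆ {i} := by
  classical
  obtain ⟨Θ, hΘ⟩ := exists_addEquiv_support_subsingleton hTF hhom ht x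
  obtain ⟨k, hk⟩ : ∃ k, support (Θ x) ⊆ {k} := hΘ.eq_empty_or_singleton.elim
    (fun h => ⟨i, h ▸ Set.empty_subset _⟩) fun ⟨k, hk⟩ => ⟨k, hk.subset⟩
  refine ⟨Θ.trans (LinearEquiv.funCongrLeft ℤ G (Equiv.swap i k)).toAddEquiv, fun l hl => ?_⟩
  have := hk (by simpa using hl)
  simp_all [Equiv.swap_apply_eq_iff]

theorem transitiveGrp_pi_of_carriesHeights (S : Set I)
    (hS : ∀ x : I → G, ∃ Θ : (I → G) ≃+ (I → G), CarriesHeights S (Θ x))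
    (hSc : ∀ y : I → G, ∃ Θ : (I → G) ≃+ (I → G), CarriesHeights Sᶜ (Θ y)) :
    TransitiveGrp (I → G) := by
  intro x y hxy
  obtain ⟨Θx, hx⟩ := hS x
  obtain ⟨Θy, hy⟩ := hSc y
  have hxy' : HeightEq (Θx x) (Θy y) := heightEq_iff_pHeight_eq.2 fun p hp => by
    rw [pHeight_addEquiv, pHeight_addEquiv, heightEq_iff_pHeight_eq.1 hxy p hp]
  obtain ⟨Θ, hΘ⟩ := exists_addEquiv_apply_eq_of_carriesHeights hTF hhom ht S hxy' hx hy
  exact ⟨(Θx.trans Θ).trans Θy.symm, by simp [hΘ]⟩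

theorem transitiveGrp_pi_of_finite [Finite I] [Nontrivial I] : TransitiveGrp (I → G) := by
  obtain ⟨i, j, hij⟩ := exists_pair_ne I
  refine transitiveGrp_pi_of_carriesHeights hTF hhom ht {j}ᶜ (fun x => ?_) fun y => ?_
  · obtain ⟨Θ, hΘ⟩ := exists_addEquiv_support_subset_singleton hTF hhom ht x i
    exact ⟨Θ, carriesHeights_of_support_subset (hΘ.trans (by simpa using hij.symm))⟩
  · obtain ⟨Θ, hΘ⟩ := exists_addEquiv_support_subset_singleton hTF hhom ht y j
    exact ⟨Θ, carriesHeights_of_support_subset (by simpa using hΘ)⟩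

theorem transitiveGrp_pi_of_infinite [Infinite I] : TransitiveGrp (I → G) := by
  let e := Infinite.natEmbedding I
  have hodd : Injective fun n => e (2 * n + 1) := fun m n h => by have := e.injective h; omega
  have heven : Injective fun n => e (2 * n) := fun m n h => by have := e.injective h; omega
  refine transitiveGrp_pi_of_carriesHeights hTF hhom ht (Set.range fun n => e (2 * n + 1))
    (fun x => exists_addEquiv_carriesHeights_of_injective hodd (fun n => Set.mem_range_self n) x)
    fun y => exists_addEquiv_carriesHeights_of_injective heven ?_ y
  rintro n ⟨m, hm⟩
  have := e.injective hm
  omega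

end Product

theorem stmt_7 (G : Type*) [AddCommGroup G] (hTF : IsTorsionFreeGrp G)
    (hhom : Homogeneous G) (ht : TransitiveGrp G)
    (I : Type*) [Nontrivial I] : TransitiveGrp (I → G) := by
  cases finite_or_infinite I
  · exact transitiveGrp_pi_of_finite hTF hhom ht
  · exact transitiveGrp_pi_of_infinite hTF hhom ht
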